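/- arXiv:0704.1588 — 3 statements merged into one kernel-verified Lean document; each statement's English description precedes it below -/
import Mathlib

section
/- Let X be a normal affine irreducible variety over a field k, Ψ an automorphism of X, and α, f ∈ k(X)* such that (Ψ*)^n(f) = α^n · f for every integer n. Then α is an invertible element of the ring of regular functions O(X). -/
/-!
Attach to every height-one prime `p` of `R` whose localization is a discrete valuation ring its
valuation `v` on `F`; its valuation ring is `R_p`, and since `R` is Noetherian and normal, every
`x ∉ R` has a pole along such a prime divisor (an associated prime of `F / R` containing the
denominators of `x` has principal maximal ideal after localizing, as `R` is integrally closed).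

Suppose `v α < 1`. Translating the divisor by `Ψⁿ` gives the valuations `v ∘ Ψⁿ`, and
`v (Ψⁿ f) = (v α)ⁿ v f`, so `f` has a pole along all translates with `n ≪ 0`. But `f` has only
finitely many poles (they are minimal primes over a denominator of `f`), so two translates
coincide and `Ψᵏ` preserves `R_p` for some `k > 0`. Then `t ↦ ((v α)ᵗ v f ≤ 1)` is `k`-periodic,
which is absurd. Hence `v α ≥ 1` for every prime divisor, and `v α ≤ 1` by the same argument for
`(Ψ⁻¹, α⁻¹)`; so `α` and `α⁻¹` both lie in `R`.
-/

open IsLocalRing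
open scoped WithZero

namespace RingAut

variable {R F : Type*} [CommRing R] [Field F] [Algebra R F] {Ψ : RingAut F} {Ψ₀ : RingAut R}

theorem inv_apply_algebraMap_eq (hΨ : ∀ r, Ψ (algebraMap R F r) = algebraMap R F (Ψ₀ r))
    (r : R) : Ψ⁻¹ (algebraMap R F r) = algebraMap R F (Ψ₀⁻¹ r) :=
  Ψ.injective (by simp [hΨ])

theorem zpow_apply_algebraMap_eq (hΨ : ∀ r, Ψ (algebraMap R F r) = algebraMap R F (Ψ₀ r))
    (n : ℤ) (r : R) : (Ψ ^ n) (algebraMap R F r) = algebraMap R F ((Ψ₀ ^ n) r) := by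
  induction n using Int.induction_on generalizing r with
  | zero => rfl
  | succ n ih => rw [zpow_add_one, zpow_add_one, RingAut.mul_apply, RingAut.mul_apply, hΨ, ih]
  | pred n ih =>
    rw [zpow_sub_one, zpow_sub_one, RingAut.mul_apply, RingAut.mul_apply,
      inv_apply_algebraMap_eq hΨ, ih]

theorem apply_mem_range_iff (hΨ : ∀ r, Ψ (algebraMap R F r) = algebraMap R F (Ψ₀ r)) {x : F} :
    Ψ x ∈ (algebraMap R F).range ↔ x ∈ (algebraMap R F).range := by
  constructor
  · rintro ⟨c, hc⟩
    exact ⟨Ψ₀⁻¹ c, by rw [← inv_apply_algebraMap_eq hΨ, hc]; simp⟩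
  · rintro ⟨c, rfl⟩
    exact ⟨Ψ₀ c, (hΨ c).symm⟩

end RingAut

section Denominators

variable {R F : Type*} [CommRing R] [Field F] [Algebra R F]

theorem mem_colon_one_singleton {s : R} {x : F} :
    s ∈ (1 : Submodule R F).colon {x} ↔ algebraMap R F s * x ∈ (algebraMap R F).range := by
  rw [Submodule.mem_colon_singleton, Submodule.mem_one, Algebra.smul_def]
  rfl

theorem exists_isPrime_eq_colon_of_notMem [IsNoetherianRing R] {y : F}
    (hy : y ∉ (1 : Submodule R F)) :
    ∃ (P : Ideal R) (z : F), P.IsPrime ∧ P = (1 : Submodule R F).colon {z} ∧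
      (1 : Submodule R F).colon {y} ≤ P := by
  have colon_mk (x : F) : (⊥ : Submodule R (F ⧸ (1 : Submodule R F))).colon
      {Submodule.Quotient.mk x} = (1 : Submodule R F).colon {x} := by
    ext r
    simp [Submodule.mem_colon_singleton, ← Submodule.Quotient.mk_smul,
      Submodule.Quotient.mk_eq_zero]
  obtain ⟨P, hP, hyP⟩ := exists_le_isAssociatedPrime_of_isNoetherianRing R
    (Submodule.Quotient.mk y : F ⧸ (1 : Submodule R F))
    (by rwa [ne_eq, Submodule.Quotient.mk_eq_zero])
  obtain ⟨hPprime, m, rfl⟩ := isAssociatedPrime_iff.mp hP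
  obtain ⟨z, rfl⟩ := Submodule.Quotient.mk_surjective _ m
  exact ⟨_, z, hPprime, colon_mk z, colon_mk y ▸ hyP⟩

variable [IsDomain R] [IsFractionRing R F]

theorem exists_mem_mul_eq_algebraMap_notMem [IsNoetherianRing R] [IsIntegrallyClosed R]
    {P : Ideal R} [P.IsPrime] {z : F} (hP : P = (1 : Submodule R F).colon {z}) :
    ∃ t ∈ P, ∃ c ∉ P, algebraMap R F t * z = algebraMap R F c := by
  by_contra! H
  obtain ⟨a, b, hb, hab⟩ := IsFractionRing.div_surjective (A := R) z
  have hbP : b ∈ P := by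
    rw [hP, mem_colon_one_singleton, ← hab,
      mul_div_cancel₀ _ (by simpa using nonZeroDivisors.ne_zero hb)]
    exact ⟨a, rfl⟩
  -- otherwise `z` would stabilise the finitely generated `R`-module `P ⊆ F`
  have hz : IsIntegral R z := by
    refine isIntegral_of_smul_mem_submodule (Submodule.map (Algebra.linearMap R F) P) ?_
      ((IsNoetherian.noetherian P).map _) z ?_
    · exact (Submodule.ne_bot_iff _).mpr ⟨algebraMap R F b, Submodule.mem_map_of_mem hbP,
        by simpa using nonZeroDivisors.ne_zero hb⟩
    · rintro _ ⟨u, hu, rfl⟩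
      obtain ⟨c, hc⟩ := mem_colon_one_singleton.mp (hP ▸ hu)
      have hcP : c ∈ P := by_contra fun hcP => H u hu c hcP hc.symm
      exact ⟨c, hcP, by simp [hc, mul_comm]⟩
  obtain ⟨c, hc⟩ := IsIntegrallyClosed.isIntegral_iff.mp hz
  exact ‹P.IsPrime›.one_notMem (hP ▸ mem_colon_one_singleton.mpr ⟨c, by simp [hc]⟩)

theorem isDiscreteValuationRing_of_eq_colon [IsNoetherianRing R] [IsIntegrallyClosed R]
    {P : Ideal R} [P.IsPrime] {z : F} (hP : P = (1 : Submodule R F).colon {z})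
    (A : Type*) [CommRing A] [IsDomain A] [Algebra R A] [IsLocalization.AtPrime A P] :
    IsDiscreteValuationRing A := by
  obtain ⟨t, htP, c, hcP, htc⟩ := exists_mem_mul_eq_algebraMap_notMem hP
  have : IsLocalRing A := IsLocalization.AtPrime.isLocalRing A P
  have : IsNoetherianRing A := IsLocalization.isNoetherianRing P.primeCompl A inferInstance
  have hmax : maximalIdeal A = Ideal.span {algebraMap R A t} := by
    rw [← IsLocalization.AtPrime.map_eq_maximalIdeal P A]
    refine le_antisymm (Ideal.map_le_iff_le_comap.mpr fun u hu => ?_)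
      (Ideal.span_le.mpr (by simpa using Ideal.mem_map_of_mem (algebraMap R A) htP))
    obtain ⟨cu, hcu⟩ := mem_colon_one_singleton.mp (hP ▸ hu)
    have key : t * cu = u * c :=
      IsFractionRing.injective R F (by rw [map_mul, map_mul, hcu, ← htc]; ring)
    rw [Ideal.mem_comap, Ideal.mem_span_singleton']
    refine ⟨IsLocalization.mk' A cu (⟨c, hcP⟩ : P.primeCompl), ?_⟩
    rw [mul_comm, IsLocalization.mul_mk'_eq_mk'_of_mul, IsLocalization.mk'_eq_iff_eq_mul,
      ← map_mul, key, map_mul]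
  have ht : algebraMap R A t ≠ 0 := by
    refine (map_ne_zero_iff _ (IsLocalization.injective A P.primeCompl_le_nonZeroDivisors)).mpr ?_
    rintro rfl
    have hc : c = 0 := IsFractionRing.injective R F (by rw [← htc, map_zero, zero_mul])
    exact hcP (hc ▸ P.zero_mem)
  have hnf : ¬ IsField A := fun hA => ht <| by
    rwa [← Ideal.span_singleton_eq_bot, ← hmax, ← isField_iff_maximalIdeal_eq]
  exact ((IsDiscreteValuationRing.TFAE A hnf).out 4 0).mp
    (show (maximalIdeal A).IsPrincipal from ⟨_, hmax⟩)

end Denominators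

theorem not_periodic_zpow_mul_le_one {G : Type*} [LinearOrderedCommGroupWithZero G]
    [MulArchimedean G] {γ c : G} (hγ : γ < 1) (hγ₀ : γ ≠ 0) (hc : c ≠ 0) {k : ℤ} (hk : 0 < k) :
    ¬ ∀ t : ℤ, (γ ^ (t + k) * c ≤ 1 ↔ γ ^ t * c ≤ 1) := by
  intro hper
  have hmul (j : ℤ) : γ ^ (k * j) * c ≤ 1 ↔ c ≤ 1 := by
    induction j using Int.induction_on with
    | zero => simp
    | succ j ih => rw [mul_add_one, hper, ih]
    | pred j ih => rw [← ih, mul_sub_one, ← hper, sub_add_cancel]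
  have hδ : γ ^ k < 1 := zpow_lt_one₀ (zero_lt_iff.mpr hγ₀) hγ hk
  obtain ⟨m, hm⟩ := exists_pow_lt₀ hδ (Units.mk0 c⁻¹ (inv_ne_zero hc))
  obtain ⟨n, hn⟩ := exists_pow_lt₀ hδ (Units.mk0 c hc)
  have hδm : (γ ^ k) ^ m * c ≤ 1 := calc
    (γ ^ k) ^ m * c ≤ c⁻¹ * c := by gcongr; exact hm.le
    _ = 1 := inv_mul_cancel₀ hc
  have hδn : 1 < ((γ ^ k) ^ n)⁻¹ * c := by
    rw [← div_eq_inv_mul, one_lt_div₀ (zero_lt_iff.mpr (pow_ne_zero _ (zpow_ne_zero _ hγ₀)))]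
    exact hn
  rw [← zpow_natCast, ← zpow_mul, hmul] at hδm
  rw [← zpow_natCast, ← zpow_mul, ← zpow_neg, ← mul_neg, ← not_le, hmul] at hδn
  exact hδn hδm

/-- A prime divisor of `Spec R` with a valuation standing in for `ord_D`; only its valuation
ring, the localization `R_p`, is prescribed. -/
structure PrimeDivisor (R F : Type*) [CommRing R] [Field F] [Algebra R F] where
  asIdeal : Ideal R
  isPrime : asIdeal.IsPrime
  height_eq_one : asIdeal.height = 1
  valuation : Valuation F ℤᵐ⁰
  valuation_le_one_iff (x : F) :
    valuation x ≤ 1 ↔ ∃ s ∉ asIdeal, algebraMap R F s * x ∈ (algebraMap R F).range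

namespace PrimeDivisor

attribute [instance] isPrime

variable {R F : Type*} [CommRing R] [Field F] [Algebra R F]

theorem valuation_le_one_congr {d d' : PrimeDivisor R F} (h : d.asIdeal = d'.asIdeal) (x : F) :
    d.valuation x ≤ 1 ↔ d'.valuation x ≤ 1 := by
  rw [valuation_le_one_iff, valuation_le_one_iff, h]

theorem valuation_algebraMap_le_one (d : PrimeDivisor R F) (r : R) :
    d.valuation (algebraMap R F r) ≤ 1 :=
  (d.valuation_le_one_iff _).mpr ⟨1, d.isPrime.one_notMem, by simp⟩

def comap (d : PrimeDivisor R F) (σ : RingAut F) (τ : RingAut R)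
    (h : ∀ r, σ (algebraMap R F r) = algebraMap R F (τ r)) : PrimeDivisor R F where
  asIdeal := d.asIdeal.comap τ
  isPrime := inferInstance
  height_eq_one := by rw [RingEquiv.height_comap, d.height_eq_one]
  valuation := d.valuation.comap σ
  valuation_le_one_iff x := by
    rw [Valuation.comap_apply, RingEquiv.coe_toRingHom, d.valuation_le_one_iff]
    constructor
    · rintro ⟨s, hs, hx⟩
      refine ⟨τ⁻¹ s, by rwa [Ideal.mem_comap, ← RingAut.mul_apply, mul_inv_cancel,
        RingAut.one_apply], ?_⟩
      rw [← RingAut.apply_mem_range_iff h, map_mul, h]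
      simpa using hx
    · rintro ⟨s, hs, hx⟩
      exact ⟨τ s, hs, by rwa [← h, ← map_mul, RingAut.apply_mem_range_iff h]⟩

theorem mem_minimalPrimes_span_singleton [IsDomain R] (d : PrimeDivisor R F) {b : R} (hb : b ≠ 0)
    (hbd : b ∈ d.asIdeal) : d.asIdeal ∈ (Ideal.span {b}).minimalPrimes := by
  have : d.asIdeal.FiniteHeight := ⟨Or.inr (by simp [d.height_eq_one])⟩
  refine Ideal.mem_minimalPrimes_of_height_le (Ideal.span_singleton_le_iff_mem _ |>.mpr hbd) ?_
  rw [d.height_eq_one]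
  exact Ideal.one_le_height_span_singleton_of_mem_nonZeroDivisors
    (mem_nonZeroDivisors_of_ne_zero hb)

variable [IsFractionRing R F]

theorem mem_asIdeal_of_valuation_lt_one (d : PrimeDivisor R F) {r : R}
    (hr : d.valuation (algebraMap R F r) < 1) : r ∈ d.asIdeal := by
  by_contra hrp
  have hr₀ : algebraMap R F r ≠ 0 :=
    (map_ne_zero_iff _ (IsFractionRing.injective R F)).mpr fun h => hrp (h ▸ d.asIdeal.zero_mem)
  have hinv : d.valuation (algebraMap R F r)⁻¹ ≤ 1 :=
    (d.valuation_le_one_iff _).mpr ⟨r, hrp, 1, by rw [map_one, mul_inv_cancel₀ hr₀]⟩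
  rw [map_inv₀, inv_le_one₀ (d.valuation.pos_iff.mpr hr₀)] at hinv
  exact hinv.not_gt hr

variable [IsDomain R]

variable (R) in
theorem finite_setOf_one_lt_valuation [IsNoetherianRing R] (f : F) :
    {p : Ideal R | ∃ d : PrimeDivisor R F, d.asIdeal = p ∧ 1 < d.valuation f}.Finite := by
  obtain ⟨a, b, hb, rfl⟩ := IsFractionRing.div_surjective (A := R) f
  refine (Ideal.finite_minimalPrimes_of_isNoetherianRing R (Ideal.span {b})).subset ?_
  rintro _ ⟨d, rfl, hd⟩
  refine d.mem_minimalPrimes_span_singleton (nonZeroDivisors.ne_zero hb)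
    (d.mem_asIdeal_of_valuation_lt_one ?_)
  have hb₀ : d.valuation (algebraMap R F b) ≠ 0 := by simpa using nonZeroDivisors.ne_zero hb
  rw [map_div₀, one_lt_div₀ (zero_lt_iff.mpr hb₀)] at hd
  exact hd.trans_le (d.valuation_algebraMap_le_one a)

theorem one_le_valuation_of_zpow_apply_eq [IsNoetherianRing R] {Ψ : RingAut F} {Ψ₀ : RingAut R}
    (hΨ : ∀ r, Ψ (algebraMap R F r) = algebraMap R F (Ψ₀ r))
    {α f : F} (hα : α ≠ 0) (hf : f ≠ 0) (h : ∀ n : ℤ, (Ψ ^ n) f = α ^ n * f)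
    (d : PrimeDivisor R F) : 1 ≤ d.valuation α := by
  by_contra! hlt
  let e (n : ℤ) : PrimeDivisor R F :=
    d.comap (Ψ ^ n) (Ψ₀ ^ n) (RingAut.zpow_apply_algebraMap_eq hΨ n)
  have horbit (a b : ℤ) :
      (e a).valuation ((Ψ ^ b) f) = d.valuation α ^ (a + b) * d.valuation f := by
    change d.valuation ((Ψ ^ a) ((Ψ ^ b) f)) = _
    rw [← RingAut.mul_apply, ← zpow_add, h, map_mul, map_zpow₀]
  have hvα : d.valuation α ≠ 0 := by simpa using hα
  have hvf : d.valuation f ≠ 0 := by simpa using hf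
  obtain ⟨N, hN⟩ := exists_pow_lt₀ hlt (Units.mk0 _ hvf)
  have hpole (m : ℕ) : 1 < (e (-(N + m : ℕ))).valuation f := by
    have := horbit (-(N + m : ℕ)) 0
    rw [zpow_zero, RingAut.one_apply, add_zero, zpow_neg, zpow_natCast] at this
    rw [this, ← div_eq_inv_mul, one_lt_div₀ (zero_lt_iff.mpr (pow_ne_zero _ hvα))]
    exact (pow_le_pow_right_of_le_one' hlt.le (N.le_add_right m)).trans_lt hN
  obtain ⟨i, j, hij, hp⟩ := (finite_setOf_one_lt_valuation R f).exists_lt_map_eq_of_forall_mem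
    (f := fun m : ℕ => (e (-(N + m : ℕ))).asIdeal) fun m => by exact ⟨_, rfl, hpole m⟩
  refine not_periodic_zpow_mul_le_one hlt hvα hvf (k := j - i) (by omega) fun t => ?_
  have := valuation_le_one_congr hp ((Ψ ^ (t + (N + j : ℕ))) f)
  rw [horbit, horbit] at this
  convert this using 4 <;> push_cast <;> ring

theorem exists_one_lt_valuation [IsNoetherianRing R] [IsIntegrallyClosed R] {x : F}
    (hx : x ∉ (algebraMap R F).range) : ∃ d : PrimeDivisor R F, 1 < d.valuation x := by
  obtain ⟨P, z, hP, hPz, hxP⟩ := exists_isPrime_eq_colon_of_notMem (R := R) (y := x)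
    (by simpa [Submodule.mem_one] using hx)
  let A := Localization.subalgebra.ofField F P.primeCompl P.primeCompl_le_nonZeroDivisors
  have := isDiscreteValuationRing_of_eq_colon hPz A
  have hs₀ (s : R) (hs : s ∉ P) : algebraMap R F s ≠ 0 :=
    (map_ne_zero_iff _ (IsFractionRing.injective R F)).mpr fun h => hs (h ▸ P.zero_mem)
  let d : PrimeDivisor R F :=
    { asIdeal := P
      isPrime := hP
      height_eq_one := by
        have h := IsLocalization.AtPrime.ringKrullDim_eq_height P A
        rw [IsDiscreteValuationRing.ringKrullDim_eq_one A] at h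
        exact_mod_cast h.symm
      valuation := (IsDiscreteValuationRing.maximalIdeal A).valuation F
      valuation_le_one_iff y := by
        constructor
        · intro hy
          obtain ⟨⟨a, r, s, hs, rfl⟩, rfl⟩ := IsDiscreteValuationRing.exists_lift_of_le_one hy
          refine ⟨s, hs, r, ?_⟩
          change _ = _ * (algebraMap R F r * (algebraMap R F s)⁻¹)
          field_simp [hs₀ s hs]
        · rintro ⟨s, hs, r, hr⟩
          have hyA : y ∈ A := ⟨r, s, hs, by rw [hr]; field_simp [hs₀ s hs]⟩
          exact IsDedekindDomain.HeightOneSpectrum.valuation_le_one _ (⟨y, hyA⟩ : A) }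
  refine ⟨d, lt_of_not_ge fun hle => ?_⟩
  obtain ⟨s, hs, hsx⟩ := (d.valuation_le_one_iff x).mp hle
  exact hs (hxP (mem_colon_one_singleton.mpr hsx))

theorem exists_unit_of_forall_valuation_eq_one [IsNoetherianRing R] [IsIntegrallyClosed R]
    {x : F} (hx : x ≠ 0) (h : ∀ d : PrimeDivisor R F, d.valuation x = 1) :
    ∃ u : Rˣ, algebraMap R F u = x := by
  have mem_range {y : F} (hy : ∀ d : PrimeDivisor R F, d.valuation y ≤ 1) :
      y ∈ (algebraMap R F).range := by
    by_contra hy'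
    obtain ⟨d, hd⟩ := exists_one_lt_valuation hy'
    exact (hy d).not_gt hd
  obtain ⟨a, ha⟩ := mem_range fun d => (h d).le
  obtain ⟨b, hb⟩ := mem_range fun d => by rw [map_inv₀, h d, inv_one]
  refine ⟨Units.mkOfMulEqOne a b (IsFractionRing.injective R F ?_), ha⟩
  rw [map_mul, ha, hb, mul_inv_cancel₀ hx, map_one]

end PrimeDivisor

theorem scaling_factor_is_unit_general (R F : Type*) [CommRing R] [IsDomain R]
    [IsNoetherianRing R] [IsIntegrallyClosed R]
    [Field F] [Algebra R F] [IsFractionRing R F]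
    (Ψ : RingAut F)
    (hΨ : ∃ Ψ₀ : RingAut R, ∀ r : R, Ψ (algebraMap R F r) = algebraMap R F (Ψ₀ r))
    (α f : F) (hα : α ≠ 0) (hf : f ≠ 0)
    (h : ∀ n : ℤ, (Ψ ^ n) f = α ^ n * f) :
    ∃ u : Rˣ, algebraMap R F u = α := by
  obtain ⟨Ψ₀, hΨ₀⟩ := hΨ
  have hinv (n : ℤ) : (Ψ⁻¹ ^ n) f = α⁻¹ ^ n * f := by rw [inv_zpow', h, inv_zpow']
  refine PrimeDivisor.exists_unit_of_forall_valuation_eq_one hα fun d => le_antisymm ?_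
    (d.one_le_valuation_of_zpow_apply_eq hΨ₀ hα hf h)
  have := d.one_le_valuation_of_zpow_apply_eq (RingAut.inv_apply_algebraMap_eq hΨ₀)
    (inv_ne_zero hα) hf hinv
  rwa [map_inv₀, one_le_inv₀ (d.valuation.pos_iff.mpr hα)] at this

/-- Let X be a normal affine irreducible variety over k (modeled by its
coordinate ring R: an integrally closed Noetherian domain which is a finitely generated
k-algebra, with fraction field F = k(X)). Let Ψ be an automorphism of X (a ring
automorphism of F restricting to an automorphism of R), and α, f ∈ k(X)* with
(Ψ*)ⁿ(f) = αⁿ·f for all n ∈ ℤ. Then α is an invertible element of O(X) = R. -/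
theorem scaling_factor_is_unit (k R F : Type*) [Field k] [CommRing R] [IsDomain R]
    [Algebra k R] [Algebra.FiniteType k R] [IsNoetherianRing R] [IsIntegrallyClosed R]
    [Field F] [Algebra R F] [IsFractionRing R F]
    (Ψ : RingAut F)
    (hΨ : ∃ Ψ₀ : RingAut R, ∀ r : R, Ψ (algebraMap R F r) = algebraMap R F (Ψ₀ r))
    (α f : F) (hα : α ≠ 0) (hf : f ≠ 0)
    (h : ∀ n : ℤ, (Ψ ^ n) f = α ^ n * f) :
    ∃ u : Rˣ, algebraMap R F u = α :=
  scaling_factor_is_unit_general R F Ψ hΨ α f hα hf h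
end

section
/- Let Φ be the polynomial automorphism of k² (char k = 0) given by Φ = f ∘ g where f(x,y) = (x + y², y) and g(x,y) = (x, y + x²). Then the maximal degree d(n) of the coordinate functions of the n-th iterate Φⁿ satisfies d(n) = 4ⁿ. In particular, d(n) is unbounded, so Φ is not of the form φ_h for any algebraic action φ of a linear algebraic group on k². -/
open MvPolynomial

/-- Composition of polynomial endomorphisms of the affine plane:
(P ∘ Q)(x) = P(Q(x)), given by substituting Q into P. -/
noncomputable def polyComp2 (k : Type*) [CommSemiring k]
    (P Q : Fin 2 → MvPolynomial (Fin 2) k) : Fin 2 → MvPolynomial (Fin 2) k :=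
  fun i => MvPolynomial.bind₁ Q (P i)

/-- The automorphism f(x,y) = (x + y², y) of the plane. -/
noncomputable def fMap (k : Type*) [CommSemiring k] : Fin 2 → MvPolynomial (Fin 2) k :=
  ![X 0 + (X 1) ^ 2, X 1]

/-- The automorphism g(x,y) = (x, y + x²) of the plane. -/
noncomputable def gMap (k : Type*) [CommSemiring k] : Fin 2 → MvPolynomial (Fin 2) k :=
  ![X 0, X 1 + (X 0) ^ 2]

/-- The automorphism Φ = f ∘ g. -/
noncomputable def PhiMap (k : Type*) [CommSemiring k] : Fin 2 → MvPolynomial (Fin 2) k :=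
  polyComp2 k (fMap k) (gMap k)

/-- The n-th iterate Φⁿ. -/
noncomputable def PhiIter (k : Type*) [CommSemiring k] :
    ℕ → (Fin 2 → MvPolynomial (Fin 2) k)
  | 0 => fun i => X i
  | n + 1 => polyComp2 k (PhiMap k) (PhiIter k n)

/-- d(n): the maximum of the total degrees of the coordinate functions of Φⁿ. -/
noncomputable def dDeg (k : Type*) [CommSemiring k] (n : ℕ) : ℕ :=
  max ((PhiIter k n 0).totalDegree) ((PhiIter k n 1).totalDegree)

/-!
Restricted to the line `y = 0`, the first coordinate of `Φⁿ` is a monic polynomial of degree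
`4ⁿ` and the second one has degree `< 2 · 4ⁿ`: in `Φⁿ⁺¹ = Φ ∘ Φⁿ` each coordinate is a square of
a monic polynomial plus a term of smaller degree, so nothing cancels the leading term. Restriction
to a line does not raise the total degree, and the same recursion bounds it by `4ⁿ` from above.
An action with `φ h = Φ` has `φ (hⁿ) = Φⁿ`, so its degrees cannot be uniformly bounded.
-/

open scoped Polynomial

theorem MvPolynomial.natDegree_aeval_le_totalDegree {σ R : Type*} [CommSemiring R] {f : σ → R[X]}
    (hf : ∀ i, (f i).natDegree ≤ 1) (P : MvPolynomial σ R) :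
    (aeval f P).natDegree ≤ P.totalDegree := by
  conv_lhs => rw [P.as_sum]
  rw [map_sum]
  refine Polynomial.natDegree_sum_le_of_forall_le _ _ fun m hm => ?_
  rw [aeval_monomial]
  refine (Polynomial.natDegree_C_mul_le _ _).trans <| (Polynomial.natDegree_prod_le _ _).trans <|
    (Finset.sum_le_sum fun i _ => ?_).trans (le_totalDegree hm)
  exact Polynomial.natDegree_pow_le.trans (by simpa using Nat.mul_le_mul_left (m i) (hf i))

theorem Polynomial.Monic.add_sq {R : Type*} [CommSemiring R] {p q : R[X]} (hp : p.Monic)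
    (hq : q.natDegree < 2 * p.natDegree) :
    (q + p ^ 2).Monic ∧ (q + p ^ 2).natDegree = 2 * p.natDegree := by
  nontriviality R
  have hdeg : (p ^ 2).natDegree = 2 * p.natDegree := by rw [hp.natDegree_pow, mul_comm]
  rw [← hdeg] at hq ⊢
  exact ⟨(hp.pow 2).add_of_right (Polynomial.degree_lt_degree hq),
    Polynomial.natDegree_add_eq_right_of_natDegree_lt hq⟩

section Henon

variable (R : Type*) [CommSemiring R]

theorem PhiIter_succ_zero (n : ℕ) :
    PhiIter R (n + 1) 0 = PhiIter R n 0 + (PhiIter R n 1 + PhiIter R n 0 ^ 2) ^ 2 := by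
  simp [PhiIter, PhiMap, polyComp2, fMap, gMap]

theorem PhiIter_succ_one (n : ℕ) :
    PhiIter R (n + 1) 1 = PhiIter R n 1 + PhiIter R n 0 ^ 2 := by
  simp [PhiIter, PhiMap, polyComp2, fMap, gMap]

theorem PhiIter_one : PhiIter R 1 = PhiMap R :=
  funext fun i => DFunLike.congr_fun bind₁_X_left (PhiMap R i)

theorem totalDegree_PhiIter_le (n : ℕ) :
    (PhiIter R n 0).totalDegree ≤ 4 ^ n ∧ (PhiIter R n 1).totalDegree ≤ 4 ^ n := by
  induction n with
  | zero =>
    have hX (i : Fin 2) : (X i : MvPolynomial (Fin 2) R).totalDegree ≤ 1 :=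
      (totalDegree_monomial_le _ _).trans (by simp)
    exact ⟨hX 0, hX 1⟩
  | succ n ih =>
    obtain ⟨h0, h1⟩ := ih
    have hsq : (PhiIter R n 0 ^ 2).totalDegree ≤ 2 * 4 ^ n :=
      (totalDegree_pow _ _).trans (by omega)
    have hsum : (PhiIter R n 1 + PhiIter R n 0 ^ 2).totalDegree ≤ 2 * 4 ^ n :=
      (totalDegree_add _ _).trans (max_le (by omega) hsq)
    rw [PhiIter_succ_zero, PhiIter_succ_one, pow_succ 4 n]
    constructor
    · exact (totalDegree_add _ _).trans <| max_le (by omega) <| (totalDegree_pow _ _).trans (by omega)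
    · exact (totalDegree_add _ _).trans <| max_le (by omega) (by omega)

noncomputable abbrev restrictXAxis : MvPolynomial (Fin 2) R →ₐ[R] R[X] :=
  aeval ![Polynomial.X, 0]

theorem restrictXAxis_PhiIter [Nontrivial R] (n : ℕ) :
    (restrictXAxis R (PhiIter R n 0)).Monic ∧
      (restrictXAxis R (PhiIter R n 0)).natDegree = 4 ^ n ∧
      (restrictXAxis R (PhiIter R n 1)).natDegree < 2 * 4 ^ n := by
  induction n with
  | zero => simp [PhiIter]
  | succ n ih =>
    obtain ⟨hp, hpdeg, hq⟩ := ih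
    simp only [PhiIter_succ_zero, PhiIter_succ_one, map_add, map_pow]
    set p := restrictXAxis R (PhiIter R n 0)
    set q := restrictXAxis R (PhiIter R n 1)
    obtain ⟨hr, hrdeg⟩ := hp.add_sq (q := q) (by rwa [hpdeg])
    obtain ⟨hs, hsdeg⟩ := hr.add_sq (q := p) (by rw [hrdeg, hpdeg]; omega)
    refine ⟨hs, ?_, ?_⟩ <;> rw [pow_succ 4 n] <;> omega

theorem totalDegree_PhiIter_zero [Nontrivial R] (n : ℕ) :
    (PhiIter R n 0).totalDegree = 4 ^ n := by
  obtain ⟨-, hdeg, -⟩ := restrictXAxis_PhiIter R n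
  refine (totalDegree_PhiIter_le R n).1.antisymm ?_
  rw [← hdeg]
  exact natDegree_aeval_le_totalDegree (fun i => by fin_cases i <;> simp) _

theorem dDeg_eq_four_pow [Nontrivial R] (n : ℕ) : dDeg R n = 4 ^ n := by
  rw [dDeg, totalDegree_PhiIter_zero]
  exact max_eq_left (totalDegree_PhiIter_le R n).2

theorem map_pow_succ_eq_PhiIter {G : Type*} [Monoid G] {φ : G → Fin 2 → MvPolynomial (Fin 2) R}
    (hφ : ∀ g g', φ (g * g') = polyComp2 R (φ g) (φ g')) {h : G} (hh : φ h = PhiMap R)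
    (n : ℕ) : φ (h ^ (n + 1)) = PhiIter R (n + 1) := by
  induction n with
  | zero => rw [pow_one, hh, PhiIter_one]
  | succ n ih => rw [pow_succ', hφ, hh, ih]; rfl

end Henon

theorem henon_iterate_degree_four_pow_general (k : Type*) [Field k] :
    (∀ n : ℕ, dDeg k n = 4 ^ n) ∧
    (∀ B : ℕ, ∃ n : ℕ, B < dDeg k n) ∧
    (∀ (G : Type) (_ : Group G) (φ : G → Fin 2 → MvPolynomial (Fin 2) k),
      (∀ g g' : G, φ (g * g') = polyComp2 k (φ g) (φ g')) →
      (∃ B : ℕ, ∀ (g : G) (i : Fin 2), (φ g i).totalDegree ≤ B) →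
      ¬ ∃ h : G, φ h = PhiMap k) := by
  have hB : ∀ B : ℕ, B < dDeg k (B + 1) := fun B => by
    rw [dDeg_eq_four_pow]
    exact (Nat.lt_pow_self (by norm_num)).trans (Nat.pow_lt_pow_succ (by norm_num))
  refine ⟨dDeg_eq_four_pow k, fun B => ⟨B + 1, hB B⟩, ?_⟩
  rintro G _ φ hφ ⟨B, hbound⟩ ⟨h, hh⟩
  have hle : dDeg k (B + 1) ≤ B := by
    rw [dDeg, ← map_pow_succ_eq_PhiIter k hφ hh B]
    exact max_le (hbound _ 0) (hbound _ 1)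
  exact (hB B).not_ge hle

/-- For Φ = f ∘ g with f(x,y) = (x+y²,y) and g(x,y) = (x,y+x²) over a
field of characteristic zero, the maximal coordinate degree of Φⁿ satisfies d(n) = 4ⁿ;
in particular d is unbounded, so Φ is not of the form φ_h for an algebraic action φ of a
group on k² (an algebraic action of a linear algebraic group having uniformly bounded
degrees of its coordinate functions). -/
theorem henon_iterate_degree_four_pow (k : Type*) [Field k] [CharZero k] :
    (∀ n : ℕ, dDeg k n = 4 ^ n) ∧
    (∀ B : ℕ, ∃ n : ℕ, B < dDeg k n) ∧
    (∀ (G : Type) (_ : Group G) (φ : G → Fin 2 → MvPolynomial (Fin 2) k),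
      (∀ g g' : G, φ (g * g') = polyComp2 k (φ g) (φ g')) →
      (∃ B : ℕ, ∀ (g : G) (i : Fin 2), (φ g i).totalDegree ≤ B) →
      ¬ ∃ h : G, φ h = PhiMap k) :=
  henon_iterate_degree_four_pow_general k
end

section
/- Let k be an algebraically closed field containing ℂ(x) with x transcendental over ℂ (e.g. the algebraic closure of ℂ(x)), set Q(y,z) = x²y − z² − xz³, and let Ψ be the automorphism of k² given by Ψ(y,z) = (y(1−xz) + Q²/4 + z⁴, z − (Q/2)x). Then the only fixpoint of Ψ in k² is (0,0). -/
theorem Transcendental.ne_zero {R A : Type*} [CommRing R] [Nontrivial R] [Ring A] [Algebra R A]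
    {a : A} (ha : Transcendental R a) : a ≠ 0 := by
  rintro rfl
  exact ha isAlgebraic_zero

section MoserFixpoint

variable {K : Type*} [Field K] {x α β : K}

theorem eq_zero_of_sub_div_two_mul_eq_self [NeZero (2 : K)] (hx : x ≠ 0) {q : K}
    (h : β - q / 2 * x = β) : q = 0 := by
  simpa [hx, two_ne_zero] using h

/-- On the curve `Q = 0` the first coordinate of a fixpoint satisfies `β⁴ = xαβ`, and
multiplying by `x` and substituting `x²α = β² + xβ³` leaves `β³ = 0`. -/
theorem eq_zero_of_fst_fixed (hx : x ≠ 0) (hQ : x ^ 2 * α - β ^ 2 - x * β ^ 3 = 0)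
    (h : α * (1 - x * β) + β ^ 4 = α) : α = 0 ∧ β = 0 := by
  have hβ3 : β ^ 3 = 0 := by linear_combination -x * h - β * hQ
  have hβ : β = 0 := pow_eq_zero_iff three_ne_zero |>.mp hβ3
  subst hβ
  refine ⟨?_, rfl⟩
  simpa [hx] using hQ

theorem moser_fixed_iff [NeZero (2 : K)] (hx : x ≠ 0) :
    (α * (1 - x * β) + (x ^ 2 * α - β ^ 2 - x * β ^ 3) ^ 2 / 4 + β ^ 4 = α ∧
        β - (x ^ 2 * α - β ^ 2 - x * β ^ 3) / 2 * x = β) ↔ (α = 0 ∧ β = 0) := by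
  constructor
  · rintro ⟨h₁, h₂⟩
    have hQ := eq_zero_of_sub_div_two_mul_eq_self hx h₂
    rw [hQ, zero_pow two_ne_zero, zero_div, add_zero] at h₁
    exact eq_zero_of_fst_fixed hx hQ h₁
  · rintro ⟨rfl, rfl⟩
    simp

end MoserFixpoint

theorem poloni_moser_aut_unique_fixpoint_general (k : Type*) [Field k]
    [Algebra ℂ k] (x : k) (hx : Transcendental ℂ x) :
    ∀ α β : k,
      (α * (1 - x * β) + (x ^ 2 * α - β ^ 2 - x * β ^ 3) ^ 2 / 4 + β ^ 4 = α ∧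
        β - (x ^ 2 * α - β ^ 2 - x * β ^ 3) / 2 * x = β) ↔ (α = 0 ∧ β = 0) := by
  have : CharZero k := charZero_of_injective_algebraMap (algebraMap ℂ k).injective
  intro α β
  exact moser_fixed_iff hx.ne_zero

/-- Let k be an algebraically closed field containing ℂ(x) with x
transcendental over ℂ, Q(y,z) = x²y − z² − xz³, and Ψ the automorphism of k² given by
Ψ(y,z) = (y(1−xz) + Q²/4 + z⁴, z − (Q/2)x). Then the only fixpoint of Ψ is (0,0). -/
theorem poloni_moser_aut_unique_fixpoint (k : Type*) [Field k] [IsAlgClosed k]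
    [Algebra ℂ k] (x : k) (hx : Transcendental ℂ x) :
    ∀ α β : k,
      (α * (1 - x * β) + (x ^ 2 * α - β ^ 2 - x * β ^ 3) ^ 2 / 4 + β ^ 4 = α ∧
        β - (x ^ 2 * α - β ^ 2 - x * β ^ 3) / 2 * x = β) ↔ (α = 0 ∧ β = 0) :=
  poloni_moser_aut_unique_fixpoint_general k x hx
end
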